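/- Suppose Z, N_X, N_E are jointly independent random elements, with Z real-valued having continuous strictly increasing CDF F_Z. Let E := N_E, X := g_X(X, E, Y, N_X) be covariates generated acyclically, and Y := h_*^{-1}(Z | X^{S_*}) where h_* is a transformation function depending only on the coordinates X^{S_*}. Then Y is conditionally independent of E given X^{S_*}, and for almost all (x^{S_*}, e), the conditional distributions of Y given (X^{S_*}=x^{S_*}, E=e) and of Y given X^{S_*}=x^{S_*} coincide, both having CDF F_Z(h_*(· | x^{S_*})). -/

import Mathlib

open MeasureTheory ProbabilityTheory

/-- The kernel `x ↦ μ.map (fun z => hinv z x)`. -/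
noncomputable def PAI.auxKer {𝒳 : Type*} [MeasurableSpace 𝒳] (μ : Measure ℝ) [SFinite μ]
    (hinv : ℝ → 𝒳 → ℝ) (hhinv : Measurable fun p : ℝ × 𝒳 => hinv p.1 p.2) : Kernel 𝒳 ℝ where
  toFun x := μ.map fun z => hinv z x
  measurable' := by
    refine Measure.measurable_of_measurable_coe _ fun s hs => ?_
    have h1 : ∀ x : 𝒳, (μ.map fun z => hinv z x) s
        = μ ((fun z => (z, x)) ⁻¹' ((fun p : ℝ × 𝒳 => hinv p.1 p.2) ⁻¹' s)) := by
      intro x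
      have hm1 : Measurable fun z => hinv z x :=
        hhinv.comp (measurable_id.prodMk measurable_const)
      rw [Measure.map_apply hm1 hs]
      rfl
    simp_rw [h1]
    exact measurable_measure_prodMk_right (hhinv hs)

lemma PAI.auxKer_apply {𝒳 : Type*} [MeasurableSpace 𝒳] (μ : Measure ℝ) [SFinite μ]
    (hinv : ℝ → 𝒳 → ℝ) (hhinv : Measurable fun p : ℝ × 𝒳 => hinv p.1 p.2) (x : 𝒳) :
    PAI.auxKer μ hinv hhinv x = μ.map fun z => hinv z x := rfl

instance {𝒳 : Type*} [MeasurableSpace 𝒳] (μ : Measure ℝ) [IsProbabilityMeasure μ]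
    (hinv : ℝ → 𝒳 → ℝ) (hhinv : Measurable fun p : ℝ × 𝒳 => hinv p.1 p.2) :
    IsMarkovKernel (PAI.auxKer μ hinv hhinv) :=
  ⟨fun x => Measure.isProbabilityMeasure_map
    ((hhinv.comp (measurable_id.prodMk measurable_const)).aemeasurable)⟩

/-- The compProd identity for the conditional distribution of `hinv (Z ω) (u (T ω))` given `T`
when `Z ⫫ T`. -/
lemma PAI.aux_compProd {Ω γ 𝒳 : Type*} [MeasurableSpace Ω] [MeasurableSpace γ]
    [MeasurableSpace 𝒳]
    (P : Measure Ω) [IsProbabilityMeasure P]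
    (Z : Ω → ℝ) (hZ : Measurable Z) (T : Ω → γ) (hT : Measurable T)
    (u : γ → 𝒳) (hu : Measurable u)
    (hinv : ℝ → 𝒳 → ℝ) (hhinv : Measurable fun p : ℝ × 𝒳 => hinv p.1 p.2)
    (κ : Kernel γ ℝ) [IsSFiniteKernel κ]
    (hκ : ∀ t, κ t = (P.map Z).map fun z => hinv z (u t))
    (hind : IndepFun T Z P) :
    P.map (fun ω => (T ω, hinv (Z ω) (u (T ω)))) = (P.map T) ⊗ₘ κ := by
  have hY : Measurable fun ω => hinv (Z ω) (u (T ω)) :=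
    hhinv.comp (hZ.prodMk (hu.comp hT))
  have hmap : P.map (fun ω => (T ω, Z ω)) = (P.map T).prod (P.map Z) :=
    (indepFun_iff_map_prod_eq_prod_map_map hT.aemeasurable hZ.aemeasurable).mp hind
  ext S hS
  have hmeas : MeasurableSet {p : γ × ℝ | (p.1, hinv p.2 (u p.1)) ∈ S} :=
    (measurable_fst.prodMk (hhinv.comp (measurable_snd.prodMk (hu.comp measurable_fst)))) hS
  rw [Measure.map_apply (hT.prodMk hY) hS, Measure.compProd_apply hS]
  have hset : (fun ω => (T ω, hinv (Z ω) (u (T ω)))) ⁻¹' S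
      = (fun ω => (T ω, Z ω)) ⁻¹' {p : γ × ℝ | (p.1, hinv p.2 (u p.1)) ∈ S} := rfl
  rw [hset, ← Measure.map_apply (hT.prodMk hZ) hmeas, hmap, Measure.prod_apply hmeas]
  refine lintegral_congr fun t => ?_
  have hm1 : Measurable fun z => hinv z (u t) :=
    hhinv.comp (measurable_id.prodMk measurable_const)
  rw [hκ t, Measure.map_apply hm1 (measurable_prodMk_left hS)]
  rfl

lemma PAI.aux_val {𝒳 : Type*} [MeasurableSpace 𝒳] (μ : Measure ℝ) [IsProbabilityMeasure μ]
    (FZ : EReal → ℝ) (hFZbot : FZ ⊥ = 0) (hFZtop : FZ ⊤ = 1)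
    (hFZcdf : ∀ t : ℝ, μ (Set.Iic t) = ENNReal.ofReal (FZ (t : EReal)))
    (htrans : ℝ → 𝒳 → EReal) (hinv : ℝ → 𝒳 → ℝ)
    (hhinv : Measurable fun p : ℝ × 𝒳 => hinv p.1 p.2)
    (hGal : ∀ (z : ℝ) (x : 𝒳) (y : ℝ), hinv z x ≤ y ↔ (z : EReal) ≤ htrans y x)
    (x : 𝒳) (y : ℝ) :
    (μ.map fun z => hinv z x) (Set.Iic y) = ENNReal.ofReal (FZ (htrans y x)) := by
  have hm1 : Measurable fun z => hinv z x :=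
    hhinv.comp (measurable_id.prodMk measurable_const)
  rw [Measure.map_apply hm1 measurableSet_Iic]
  have hset : (fun z => hinv z x) ⁻¹' (Set.Iic y) = {z : ℝ | (z : EReal) ≤ htrans y x} := by
    ext z; simp [hGal z x y]
  rw [hset]
  set a := htrans y x with ha
  clear_value a
  induction a using EReal.rec with
  | bot =>
      have : {z : ℝ | (z : EReal) ≤ (⊥ : EReal)} = (∅ : Set ℝ) := by
        ext z; simp
      simp [this, hFZbot]
  | coe t =>
      have : {z : ℝ | (z : EReal) ≤ (t : EReal)} = Set.Iic t := by
        ext z; simp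
      rw [this, hFZcdf]
  | top =>
      have : {z : ℝ | (z : EReal) ≤ (⊤ : EReal)} = Set.univ := by
        ext z; simp
      simp [this, hFZtop]

/-- Invariance of the causal parental set in a structural causal TRAM: suppose
`Z, N_X, N_E` are jointly independent (`N_E ⫫ N_X` and `Z ⫫ (N_E, N_X)`), `Z` has
continuous strictly increasing CDF `F_Z`, the environments are `E = N_E`, the parental
covariates `X^{S_*} = φ(N_E, N_X)` are generated acyclically from the noise (not from
`Z`), and `Y = h_*^{-1}(Z | X^{S_*})` where the generalized inverse satisfies the Galois
connection `h_*^{-1}(z|x) ≤ y ↔ z ≤ h_*(y|x)`. Then `Y ⫫ E | X^{S_*}` and for almost all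
`(x, e)` the conditional distributions of `Y` given `(X^{S_*} = x, E = e)` and given
`X^{S_*} = x` coincide, both with CDF `F_Z(h_*(·|x))`. -/
theorem parents_are_invariant {Ω 𝒩 ℰ 𝒳 : Type*}
    [mΩ : MeasurableSpace Ω] [StandardBorelSpace Ω] [Nonempty Ω]
    [MeasurableSpace 𝒩] [MeasurableSpace ℰ]
    [MeasurableSpace 𝒳] [StandardBorelSpace 𝒳] [Nonempty 𝒳]
    (P : Measure Ω) [IsProbabilityMeasure P]
    (Z : Ω → ℝ) (NX : Ω → 𝒩) (NE : Ω → ℰ)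
    (hZ : Measurable Z) (hNX : Measurable NX) (hNE : Measurable NE)
    -- joint independence of the noise variables
    (hindep₁ : IndepFun NE NX P)
    (hindep₂ : IndepFun Z (fun ω => (NE ω, NX ω)) P)
    -- `Z` has continuous strictly increasing (extended) CDF `F_Z`
    (FZ : EReal → ℝ)
    (hFZmono : StrictMono fun t : ℝ => FZ (t : EReal))
    (hFZcont : Continuous fun t : ℝ => FZ (t : EReal))
    (hFZbot : FZ ⊥ = 0) (hFZtop : FZ ⊤ = 1)
    (hFZcdf : ∀ t : ℝ, P.map Z (Set.Iic t) = ENNReal.ofReal (FZ (t : EReal)))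
    -- structural assignments: `E := N_E`, `X^{S_*} := φ(N_E, N_X)`,
    -- `Y := h_*^{-1}(Z | X^{S_*})`
    (E : Ω → ℰ) (hE : E = NE)
    (φ : ℰ × 𝒩 → 𝒳) (hφ : Measurable φ)
    (XS : Ω → 𝒳) (hXS : XS = fun ω => φ (NE ω, NX ω))
    (htrans : ℝ → 𝒳 → EReal) (hinv : ℝ → 𝒳 → ℝ)
    (hhinv : Measurable fun p : ℝ × 𝒳 => hinv p.1 p.2)
    (hGal : ∀ (z : ℝ) (x : 𝒳) (y : ℝ), hinv z x ≤ y ↔ (z : EReal) ≤ htrans y x)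
    (Y : Ω → ℝ) (hYdef : Y = fun ω => hinv (Z ω) (XS ω))
    (hXSmeas : Measurable XS) :
    -- conclusion (i): `Y ⫫ E | X^{S_*}`
    CondIndepFun (MeasurableSpace.comap XS inferInstance) hXSmeas.comap_le Y E P ∧
    -- conclusion (ii): conditional CDF of `Y` given `(X^{S_*}, E)` is `F_Z(h_*(·|x))`
    (∀ᵐ p ∂(P.map fun ω => (XS ω, E ω)), ∀ y : ℝ,
      condDistrib Y (fun ω => (XS ω, E ω)) P p (Set.Iic y)
        = ENNReal.ofReal (FZ (htrans y p.1))) ∧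
    -- conclusion (iii): conditional CDF of `Y` given `X^{S_*}` is `F_Z(h_*(·|x))`
    (∀ᵐ x ∂(P.map XS), ∀ y : ℝ,
      condDistrib Y XS P x (Set.Iic y) = ENNReal.ofReal (FZ (htrans y x))) := by
  have hEm : Measurable E := by rw [hE]; exact hNE
  have hYm : Measurable Y := by rw [hYdef]; exact hhinv.comp (hZ.prodMk hXSmeas)
  haveI : IsProbabilityMeasure (P.map Z) := Measure.isProbabilityMeasure_map hZ.aemeasurable
  set μZ := P.map Z with hμZ
  set ν : Kernel 𝒳 ℝ := PAI.auxKer μZ hinv hhinv with hν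
  have hνx : ∀ x, ν x = μZ.map fun z => hinv z x := fun _ => rfl
  have hW : Measurable fun ω => (XS ω, E ω) := hXSmeas.prodMk hEm
  -- independence facts
  have hZXS : IndepFun XS Z P := by
    have h := (hindep₂.comp measurable_id hφ).symm
    have heq : XS = φ ∘ fun ω => (NE ω, NX ω) := hXS
    rw [heq]; exact h
  have hZW : IndepFun (fun ω => (XS ω, E ω)) Z P := by
    have h := (hindep₂.comp measurable_id (hφ.prodMk measurable_fst)).symm
    have heq : (fun ω => (XS ω, E ω))
        = (fun n : ℰ × 𝒩 => (φ n, n.1)) ∘ fun ω => (NE ω, NX ω) := by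
      funext ω; rw [hXS, hE]; rfl
    rw [heq]; exact h
  -- the kernel for the pair (XS, E)
  set κW : Kernel (𝒳 × ℰ) ℝ := ν.comap Prod.fst measurable_fst with hκW
  have hκWapp : ∀ p : 𝒳 × ℰ, κW p = ν p.1 := fun p => Kernel.comap_apply ν measurable_fst p
  haveI : IsMarkovKernel κW := by
    constructor; intro p; rw [hκWapp]
    exact IsMarkovKernel.isProbabilityMeasure p.1
  -- compProd identities
  have hcomp₁ : P.map (fun ω => (XS ω, Y ω)) = (P.map XS) ⊗ₘ ν := by
    rw [hYdef]
    exact PAI.aux_compProd P Z hZ XS hXSmeas id measurable_id hinv hhinv ν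
      (fun t => rfl) hZXS
  have hcomp₂ : P.map (fun ω => ((XS ω, E ω), Y ω)) = (P.map fun ω => (XS ω, E ω)) ⊗ₘ κW := by
    rw [hYdef]
    exact PAI.aux_compProd P Z hZ (fun ω => (XS ω, E ω)) hW Prod.fst measurable_fst
      hinv hhinv κW (fun t => by rw [hκWapp]; rfl) hZW
  have h₃ := (condDistrib_ae_eq_of_measure_eq_compProd_of_measurable hXSmeas hYm hcomp₁).symm
  have h₂ := (condDistrib_ae_eq_of_measure_eq_compProd_of_measurable hW hYm hcomp₂).symm
  have hval : ∀ (x : 𝒳) (y : ℝ), ν x (Set.Iic y) = ENNReal.ofReal (FZ (htrans y x)) :=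
    fun x y => PAI.aux_val μZ FZ hFZbot hFZtop hFZcdf htrans hinv hhinv hGal x y
  refine ⟨?_, ?_, ?_⟩
  · -- conditional independence
    have hm' : MeasurableSpace.comap XS inferInstance ≤ mΩ := hXSmeas.comap_le
    haveI : SigmaFinite (P.trim hm') := by infer_instance
    refine (condIndepFun_iff_condExp_inter_preimage_eq_mul hYm hEm).mpr ?_
    intro s t hs ht
    -- the (MeasurableSpace.comap XS inferInstance)-measurable candidate for `P⟦Y⁻¹s | (MeasurableSpace.comap XS inferInstance)⟧`
    set gs : Ω → ℝ := fun ω => (ν (XS ω) s).toReal with hgsdef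
    have hXS' : @Measurable Ω 𝒳 (MeasurableSpace.comap XS inferInstance) _ XS := fun u hu => ⟨u, hu, rfl⟩
    have hgs : @Measurable Ω ℝ (MeasurableSpace.comap XS inferInstance) _ gs :=
      ((ν.measurable_coe hs).ennreal_toReal).comp hXS'
    have hgs_sm : @StronglyMeasurable Ω ℝ _ (MeasurableSpace.comap XS inferInstance) gs := hgs.stronglyMeasurable
    have hgs_bdd : ∀ ω, ‖gs ω‖ ≤ 1 := by
      intro ω
      rw [Real.norm_eq_abs, abs_of_nonneg ENNReal.toReal_nonneg]
      have h1 : ν (XS ω) s ≤ 1 := prob_le_one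
      simpa using ENNReal.toReal_mono (by simp) h1
    -- step (a): `P⟦Y⁻¹s | (MeasurableSpace.comap XS inferInstance)⟧ =ᵐ gs`
    have h₄ := condDistrib_ae_eq_condExp (μ := P) hXSmeas hYm hs
    have h₅ : ∀ᵐ ω ∂P, ν (XS ω) = condDistrib Y XS P (XS ω) :=
      ae_of_ae_map hXSmeas.aemeasurable h₃
    have hcondY : (P⟦Y ⁻¹' s|(MeasurableSpace.comap XS inferInstance)⟧) =ᵐ[P] gs := by
      filter_upwards [h₄, h₅] with ω h1 h2
      rw [← h1, ← h2]
      rfl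
    -- integrability facts
    have hind_int : Integrable ((E ⁻¹' t).indicator fun _ => (1 : ℝ)) P :=
      (integrable_const (1 : ℝ)).indicator (hEm ht)
    have hmul_int : Integrable (fun ω => gs ω * (E ⁻¹' t).indicator (fun _ => (1 : ℝ)) ω) P :=
      hind_int.bdd_mul ((hgs.mono hm' le_rfl).aestronglyMeasurable) (Filter.Eventually.of_forall hgs_bdd)
    have hf_int : Integrable ((Y ⁻¹' s ∩ E ⁻¹' t).indicator fun _ => (1 : ℝ)) P :=
      (integrable_const (1 : ℝ)).indicator ((hYm hs).inter (hEm ht))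
    -- pull-out property
    have hpull : (P[(fun ω => gs ω * (E ⁻¹' t).indicator (fun _ => (1 : ℝ)) ω)|(MeasurableSpace.comap XS inferInstance)])
        =ᵐ[P] fun ω => gs ω * (P⟦E ⁻¹' t|(MeasurableSpace.comap XS inferInstance)⟧) ω :=
      condExp_mul_of_stronglyMeasurable_left hgs_sm hmul_int hind_int
    -- the key set-integral identity (from the compProd identity for (XS, E))
    have hkey : ∀ (A' : Set 𝒳), MeasurableSet A' →
        P ((XS ⁻¹' A' ∩ E ⁻¹' t) ∩ Y ⁻¹' s)
          = ∫⁻ ω in XS ⁻¹' A' ∩ E ⁻¹' t, ν (XS ω) s ∂P := by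
      intro A' hA'
      have h1 := congrArg (fun μ : Measure ((𝒳 × ℰ) × ℝ) => μ ((A' ×ˢ t) ×ˢ s)) hcomp₂
      rw [Measure.map_apply (hW.prodMk hYm) (((hA'.prod ht)).prod hs),
        Measure.compProd_apply_prod (hA'.prod ht) hs] at h1
      have h2 : (fun ω => ((XS ω, E ω), Y ω)) ⁻¹' ((A' ×ˢ t) ×ˢ s)
          = (XS ⁻¹' A' ∩ E ⁻¹' t) ∩ Y ⁻¹' s := by
        ext ω; simp [Set.mem_prod, and_assoc]
      rw [h2] at h1
      rw [h1, setLIntegral_map (hA'.prod ht) (κW.measurable_coe hs) hW]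
      refine lintegral_congr_ae (ae_restrict_of_ae (Filter.Eventually.of_forall fun ω => ?_))
      simp only [hκWapp]
    -- conclude via uniqueness of conditional expectation
    have hmain : (fun ω => gs ω * (P⟦E ⁻¹' t|(MeasurableSpace.comap XS inferInstance)⟧) ω)
        =ᵐ[P] (P⟦Y ⁻¹' s ∩ E ⁻¹' t|(MeasurableSpace.comap XS inferInstance)⟧) := by
      refine ae_eq_condExp_of_forall_setIntegral_eq hm' hf_int
        (fun A hA _ => ((integrable_condExp.bdd_mul
          ((hgs.mono hm' le_rfl).aestronglyMeasurable)
          (Filter.Eventually.of_forall hgs_bdd)).integrableOn))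
        ?_ ((hgs_sm.mul stronglyMeasurable_condExp).aestronglyMeasurable)
      rintro A ⟨A', hA', rfl⟩ -
      have hAm : MeasurableSet (XS ⁻¹' A') := hXSmeas hA'
      have hstep1 : ∫ ω in XS ⁻¹' A', gs ω * (P⟦E ⁻¹' t|(MeasurableSpace.comap XS inferInstance)⟧) ω ∂P
          = ∫ ω in XS ⁻¹' A', gs ω * (E ⁻¹' t).indicator (fun _ => (1 : ℝ)) ω ∂P := by
        rw [← setIntegral_condExp hm' hmul_int ⟨A', hA', rfl⟩]
        exact integral_congr_ae (ae_restrict_of_ae hpull.symm)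
      rw [hstep1]
      -- compute both sides explicitly
      have hlhs : ∫ ω in XS ⁻¹' A', gs ω * (E ⁻¹' t).indicator (fun _ => (1 : ℝ)) ω ∂P
          = (∫⁻ ω in XS ⁻¹' A' ∩ E ⁻¹' t, ν (XS ω) s ∂P).toReal := by
        have hprod : (fun ω => gs ω * (E ⁻¹' t).indicator (fun _ => (1 : ℝ)) ω)
            = (E ⁻¹' t).indicator gs := by
          funext ω
          by_cases hω : ω ∈ E ⁻¹' t <;> simp [Set.indicator_of_mem, Set.indicator_of_notMem, hω]
        rw [hprod, setIntegral_indicator (hEm ht)]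
        rw [integral_toReal]
        · exact ((ν.measurable_coe hs).comp hXSmeas).aemeasurable.restrict
        · exact Filter.Eventually.of_forall fun ω => lt_of_le_of_lt prob_le_one (by simp)
      have hrhs : ∫ ω in XS ⁻¹' A', (Y ⁻¹' s ∩ E ⁻¹' t).indicator (fun _ => (1 : ℝ)) ω ∂P
          = (P ((XS ⁻¹' A' ∩ E ⁻¹' t) ∩ Y ⁻¹' s)).toReal := by
        rw [setIntegral_indicator ((hYm hs).inter (hEm ht)), setIntegral_const, smul_eq_mul,
          mul_one]
        have hseteq : (XS ⁻¹' A' ∩ (Y ⁻¹' s ∩ E ⁻¹' t)) = ((XS ⁻¹' A' ∩ E ⁻¹' t) ∩ Y ⁻¹' s) := by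
          ext ω; simp only [Set.mem_inter_iff]; tauto
        rw [hseteq]
        rfl
      rw [hlhs, hrhs, hkey A' hA']
    refine hmain.symm.trans ?_
    filter_upwards [hcondY] with ω h1
    rw [h1]
  · filter_upwards [h₂] with p hp y
    rw [← hp, hκWapp]
    exact hval p.1 y
  · filter_upwards [h₃] with x hx y
    rw [← hx]
    exact hval x y
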